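/- arXiv:1704.00903 — 2 statements merged into one kernel-verified Lean document; each statement's English description precedes it below -/
import Mathlib

section
/- Let f be a strictly increasing Allee map on [0,b] with threshold A_f and carrying capacity K_f, and let g be a strictly increasing Allee map on [0,b] with threshold A_g and carrying capacity K_g, where A_f < A_g < K_f < K_g. If x₀ ∈ [0, A_f], then μ({ω : the sequence n ↦ X n ω converges to 0}) = 1. -/
/-!
Both maps lie below the diagonal on `[0, A_f]`, so every random orbit starting there is
nonincreasing and stays in `[0, A_f]`. Its limit `L` satisfies `L ≤ max (f L) (g L)`; since
`f` and `g` are strictly below the diagonal on `(0, A_f)`, this forces `L = 0` as soon as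
`L < A_f`. The first application of `g` pushes the orbit strictly below `A_f < A_g`, and
almost surely `g` is applied at least once, because the all-`f` event has probability
`lim pᴺ = 0`.
-/

open MeasureTheory ProbabilityTheory Filter Set

/-- `f` is a strictly increasing Allee map on `[0, b]` with threshold `A` and
carrying capacity `K`. -/
def IsIncAlleeMap (b A K : ℝ) (f : ℝ → ℝ) : Prop :=
  0 < A ∧ A < K ∧ K < b ∧
  MapsTo f (Icc 0 b) (Icc 0 b) ∧
  ContinuousOn f (Icc 0 b) ∧
  StrictMonoOn f (Icc 0 b) ∧
  f 0 = 0 ∧ f A = A ∧ f K = K ∧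
  (∀ x ∈ Ioo 0 A ∪ Ioc K b, f x < x) ∧
  (∀ x ∈ Ioo A K, x < f x)

/-- The random orbit driven by a sequence of coin flips: apply `f` when the coin shows
`true` and `g` when it shows `false`. -/
def randOrbit (f g : ℝ → ℝ) (x₀ : ℝ) : ℕ → (ℕ → Bool) → ℝ
  | 0, _ => x₀
  | n + 1, ω => if ω n then f (randOrbit f g x₀ n ω) else g (randOrbit f g x₀ n ω)

open Topology

theorem tendsto_zero_of_succ_le_of_lt_self {φ : ℝ → ℝ} {a : ℝ} {x : ℕ → ℝ}
    (hnonneg : ∀ n, 0 ≤ x n) (hanti : Antitone x) (hstep : ∀ n, x (n + 1) ≤ φ (x n))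
    (hφ : ∀ y ∈ Ioo 0 a, φ y < y) (hcont : ContinuousOn φ (Ioo 0 a)) (hlt : ∃ n, x n < a) :
    Tendsto x atTop (𝓝 0) := by
  have hbdd : BddBelow (range x) := ⟨0, by rintro _ ⟨n, rfl⟩; exact hnonneg n⟩
  have hL := tendsto_atTop_ciInf hanti hbdd
  set L := ⨅ n, x n
  obtain ⟨n₀, hn₀⟩ := hlt
  have hLa : L < a := (ciInf_le hbdd n₀).trans_lt hn₀
  rcases (le_ciInf hnonneg : 0 ≤ L).eq_or_lt with hL0 | hL0
  · rwa [hL0]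
  have hLmem : L ∈ Ioo 0 a := ⟨hL0, hLa⟩
  have hφL : Tendsto (fun n => φ (x n)) atTop (𝓝 (φ L)) :=
    ((hcont.continuousAt (Ioo_mem_nhds hL0 hLa)).tendsto).comp hL
  have hLφ : L ≤ φ L :=
    le_of_tendsto_of_tendsto' (hL.comp (tendsto_add_atTop_nat 1)) hφL hstep
  exact absurd (hφ L hLmem) hLφ.not_gt

theorem measure_iInter_preimage_eq_zero {Ω β : Type*} [MeasurableSpace Ω] [MeasurableSpace β]
    {μ : Measure Ω} {X : ℕ → Ω → β} (hX : iIndepFun X μ) {t : Set β} (ht : MeasurableSet t)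
    {q : ENNReal} (hq : q < 1) (hle : ∀ n, μ (X n ⁻¹' t) ≤ q) :
    μ (⋂ n, X n ⁻¹' t) = 0 := by
  have hN : ∀ N, μ (⋂ n, X n ⁻¹' t) ≤ q ^ N := fun N =>
    calc μ (⋂ n, X n ⁻¹' t)
        ≤ μ (⋂ n ∈ Finset.range N, X n ⁻¹' t) :=
          measure_mono fun ω hω => mem_iInter₂.2 fun n _ => mem_iInter.1 hω n
      _ = ∏ n ∈ Finset.range N, μ (X n ⁻¹' t) :=
          hX.measure_inter_preimage_eq_mul _ fun _ _ => ht
      _ ≤ ∏ _n ∈ Finset.range N, q := Finset.prod_le_prod' fun n _ => hle n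
      _ = q ^ N := by rw [Finset.prod_const, Finset.card_range]
  exact nonpos_iff_eq_zero.1 (ge_of_tendsto' (ENNReal.tendsto_pow_atTop_nhds_zero_of_lt_one hq) hN)

namespace IsIncAlleeMap

variable {b A K : ℝ} {f : ℝ → ℝ}

theorem threshold_lt (hf : IsIncAlleeMap b A K f) : A < b := hf.2.1.trans hf.2.2.1

theorem map_lt_self (hf : IsIncAlleeMap b A K f) {x : ℝ} (hx : x ∈ Ioo 0 A) : f x < x :=
  hf.2.2.2.2.2.2.2.2.2.1 x (Or.inl hx)

theorem continuousOn_Ioo (hf : IsIncAlleeMap b A K f) : ContinuousOn f (Ioo 0 A) :=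
  hf.2.2.2.2.1.mono (Ioo_subset_Icc_self.trans (Icc_subset_Icc_right hf.threshold_lt.le))

theorem map_le_self (hf : IsIncAlleeMap b A K f) {x : ℝ} (hx : x ∈ Icc 0 A) : f x ≤ x := by
  rcases hx.1.eq_or_lt with rfl | hx0
  · exact hf.2.2.2.2.2.2.1.le
  rcases hx.2.eq_or_lt with rfl | hxA
  · exact hf.2.2.2.2.2.2.2.1.le
  exact (hf.map_lt_self ⟨hx0, hxA⟩).le

theorem mapsTo_Icc (hf : IsIncAlleeMap b A K f) {a : ℝ} (ha : a ≤ A) :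
    MapsTo f (Icc 0 a) (Icc 0 a) := by
  intro x hx
  have hxA : x ∈ Icc 0 A := ⟨hx.1, hx.2.trans ha⟩
  have hxb : x ∈ Icc 0 b := ⟨hx.1, hxA.2.trans hf.threshold_lt.le⟩
  exact ⟨(hf.2.2.2.1 hxb).1, (hf.map_le_self hxA).trans hx.2⟩

theorem map_lt (hf : IsIncAlleeMap b A K f) {a x : ℝ} (ha : 0 < a) (haA : a < A)
    (hx : x ∈ Icc 0 a) : f x < a := by
  rcases hx.1.eq_or_lt with rfl | hx0
  · rwa [hf.2.2.2.2.2.2.1]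
  exact (hf.map_lt_self ⟨hx0, hx.2.trans_lt haA⟩).trans_le hx.2

end IsIncAlleeMap

section randOrbit

variable {f g : ℝ → ℝ} {x₀ : ℝ}

theorem randOrbit_succ (n : ℕ) (ω : ℕ → Bool) :
    randOrbit f g x₀ (n + 1) ω =
      if ω n then f (randOrbit f g x₀ n ω) else g (randOrbit f g x₀ n ω) := rfl

theorem randOrbit_succ_le_max (n : ℕ) (ω : ℕ → Bool) :
    randOrbit f g x₀ (n + 1) ω ≤ max (f (randOrbit f g x₀ n ω)) (g (randOrbit f g x₀ n ω)) := by
  rw [randOrbit_succ]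
  split
  · exact le_max_left _ _
  · exact le_max_right _ _

theorem randOrbit_mem {s : Set ℝ} (hf : MapsTo f s s) (hg : MapsTo g s s) (hx₀ : x₀ ∈ s)
    (n : ℕ) (ω : ℕ → Bool) : randOrbit f g x₀ n ω ∈ s := by
  induction n with
  | zero => exact hx₀
  | succ n ih =>
    rw [randOrbit_succ]
    split
    · exact hf ih
    · exact hg ih

theorem randOrbit_antitone {s : Set ℝ} (hfs : MapsTo f s s) (hgs : MapsTo g s s)
    (hf : ∀ x ∈ s, f x ≤ x) (hg : ∀ x ∈ s, g x ≤ x) (hx₀ : x₀ ∈ s) (ω : ℕ → Bool) :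
    Antitone fun n => randOrbit f g x₀ n ω :=
  antitone_nat_of_succ_le fun n =>
    have hn := randOrbit_mem hfs hgs hx₀ n ω
    (randOrbit_succ_le_max n ω).trans (max_le (hf _ hn) (hg _ hn))

theorem tendsto_randOrbit_zero_of_exists_false {b Af Kf Ag Kg : ℝ}
    (hf : IsIncAlleeMap b Af Kf f) (hg : IsIncAlleeMap b Ag Kg g) (hAfAg : Af < Ag)
    (hx₀ : x₀ ∈ Icc 0 Af) {ω : ℕ → Bool} (hω : ∃ n, ω n = false) :
    Tendsto (fun n => randOrbit f g x₀ n ω) atTop (𝓝 0) := by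
  have hfs := hf.mapsTo_Icc le_rfl
  have hgs := hg.mapsTo_Icc hAfAg.le
  have hmem := randOrbit_mem hfs hgs hx₀ (ω := ω)
  have hbelow : ∀ y ∈ Ioo 0 Af, max (f y) (g y) < y := fun y hy =>
    max_lt (hf.map_lt_self hy) (hg.map_lt_self ⟨hy.1, hy.2.trans hAfAg⟩)
  have hcont : ContinuousOn (fun y => max (f y) (g y)) (Ioo 0 Af) :=
    hf.continuousOn_Ioo.sup (hg.continuousOn_Ioo.mono (Ioo_subset_Ioo_right hAfAg.le))
  obtain ⟨n, hn⟩ := hω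
  have hlt : randOrbit f g x₀ (n + 1) ω < Af := by
    rw [randOrbit_succ, hn, if_neg Bool.false_ne_true]
    exact hg.map_lt hf.1 hAfAg (hmem n)
  exact tendsto_zero_of_succ_le_of_lt_self (fun n => (hmem n).1)
    (randOrbit_antitone hfs hgs (fun x => hf.map_le_self) (fun x hx => hg.map_le_self
      ⟨hx.1, hx.2.trans hAfAg.le⟩) hx₀ ω) (randOrbit_succ_le_max · ω) hbelow hcont ⟨n + 1, hlt⟩

end randOrbit

theorem stmt2_general
    (b Af Kf Ag Kg : ℝ)
    (f g : ℝ → ℝ)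
    (hf : IsIncAlleeMap b Af Kf f) (hg : IsIncAlleeMap b Ag Kg g)
    (horder : Af < Ag ∧ Ag < Kf ∧ Kf < Kg)
    (p : ℝ) (hp : p ∈ Ioo (0 : ℝ) 1)
    (μ : Measure (ℕ → Bool)) [IsProbabilityMeasure μ]
    (hindep : iIndepFun (fun n (ω : ℕ → Bool) => ω n) μ)
    (hcoin : ∀ n, μ {ω | ω n = true} = ENNReal.ofReal p)
    (x₀ : ℝ) (hx₀ : x₀ ∈ Icc 0 Af) :
    μ {ω | Tendsto (fun n => randOrbit f g x₀ n ω) atTop (nhds 0)} = 1 := by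
  have hallTrue : μ (⋂ n, (fun ω : ℕ → Bool => ω n) ⁻¹' {true}) = 0 :=
    measure_iInter_preimage_eq_zero hindep (measurableSet_singleton true)
      (ENNReal.ofReal_lt_one.2 hp.2) fun n => (hcoin n).le
  refine (measure_congr (ae_eq_univ.2 (measure_mono_null (fun ω hω => ?_) hallTrue))).trans
    measure_univ
  refine mem_iInter.2 fun n => ?_
  by_contra hn
  exact hω (tendsto_randOrbit_zero_of_exists_false hf hg horder.1 hx₀ ⟨n, by simpa using hn⟩)

theorem stmt2
    (b Af Kf Ag Kg : ℝ) (hb : 0 < b)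
    (f g : ℝ → ℝ)
    (hf : IsIncAlleeMap b Af Kf f) (hg : IsIncAlleeMap b Ag Kg g)
    (horder : Af < Ag ∧ Ag < Kf ∧ Kf < Kg)
    (p : ℝ) (hp : p ∈ Ioo (0 : ℝ) 1)
    (μ : Measure (ℕ → Bool)) [IsProbabilityMeasure μ]
    (hindep : iIndepFun (fun n (ω : ℕ → Bool) => ω n) μ)
    (hcoin : ∀ n, μ {ω | ω n = true} = ENNReal.ofReal p)
    (x₀ : ℝ) (hx₀ : x₀ ∈ Icc 0 Af) :
    μ {ω | Tendsto (fun n => randOrbit f g x₀ n ω) atTop (nhds 0)} = 1 :=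
  stmt2_general b Af Kf Ag Kg f g hf hg horder p hp μ hindep hcoin x₀ hx₀
end

section
/- Let f be a strictly increasing Allee map on [0,b] with threshold A_f and carrying capacity K_f, and let g be a strictly increasing Allee map on [0,b] with threshold A_g and carrying capacity K_g, where A_f < A_g < K_f < K_g. Let δ > 0 be such that the sets U₁ = {x ∈ (0,A_f) : min(x−f(x), x−g(x)) ≥ δ}, U₂ = {x ∈ (A_g,K_f) : min(f(x)−x, g(x)−x) ≥ δ}, U₃ = {x ∈ (K_g,b) : min(x−f(x), x−g(x)) ≥ δ} are nonempty, and assume that for every x ∈ [0,b] there exists x* ∈ [x,b] with min(x*−f(x*), x*−g(x*)) ≥ δ. Set w₁ = inf U₁, w₂ = inf U₂, w₃ = inf U₃, z₁ = sup U₁ and z₂ = sup U₂. If y₀ ∈ (z₁, w₂), then, setting p₀ = μ({ω : ∃ n₀ ∈ ℕ, ∀ n ≥ n₀, Y n ω ∈ [0, w₁)}) and p₁ = μ({ω : ∃ n₀ ∈ ℕ, ∀ n ≥ n₀, Y n ω ∈ (z₂, w₃)}), we have p₀ > 0, p₁ > 0 and p₀ + p₁ = 1. -/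
open MeasureTheory ProbabilityTheory Filter Set

/-- Truncation of the real line to the interval `[0, b]`. -/
noncomputable def chi (b x : ℝ) : ℝ := if x < 0 then 0 else if x ≤ b then x else b

/-- The randomly perturbed orbit: at each step apply `f` (on `true`) or `g` (on `false`),
add the noise, and truncate to `[0, b]`. -/
noncomputable def pertOrbit (b : ℝ) (f g : ℝ → ℝ) (y₀ : ℝ) :
    ℕ → (ℕ → Bool × ℝ) → ℝ
  | 0, _ => y₀
  | n + 1, ω =>
      if (ω n).1 then chi b (f (pertOrbit b f g y₀ n ω) + (ω n).2)
      else chi b (g (pertOrbit b f g y₀ n ω) + (ω n).2)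

/-!
Both `[0, w₁)` and `(z₂, w₃)` are traps: at their end points both maps move by at least `δ`
towards the inside, so by monotonicity no step with noise in `(-δ, δ)` leaves them. Conversely,
every point of `[0, b]` has a neighbourhood that a finite pattern of coin values and
nondegenerate noise windows drives into one of the traps: below `w₂` the smaller of `f, g` stays
below `t + δ`, which lets the orbit descend into `[0, w₁)` by steps of a uniform size; on
`[w₂, z₂]`, and from any point above `z₁`, the larger one stays above `t - δ`, which lets it climb
into `(z₂, w₃)`; above `w₃` both maps lie below the diagonal, so it descends into `(z₂, w₃)`.
A Lebesgue number of this cover yields finitely many patterns, chosen measurably from the current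
state, each of positive probability. As disjoint blocks of coordinates are independent, the
probability of missing the patterns in the first `K` blocks is at most `q ^ K` with `q < 1`, so
almost surely the orbit falls into a trap and then stays there. From `y₀`, which lies strictly
between `z₁` and `w₂`, both traps can be reached, each hence with positive probability.
-/

open Topology
open scoped ENNReal

lemma chi_mem_Icc {b : ℝ} (hb : 0 ≤ b) (x : ℝ) : chi b x ∈ Icc 0 b := by
  unfold chi; split_ifs <;> constructor <;> linarith

lemma chi_of_mem {b x : ℝ} (hx : x ∈ Icc 0 b) : chi b x = x := by
  rw [chi, if_neg (not_lt.2 hx.1), if_pos hx.2]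

lemma chi_eq_max_min {b : ℝ} (hb : 0 ≤ b) (x : ℝ) : chi b x = max 0 (min x b) := by
  unfold chi; split_ifs with h₁ h₂
  · rw [min_eq_left (by linarith), max_eq_left h₁.le]
  · rw [min_eq_left h₂, max_eq_right (not_lt.1 h₁)]
  · rw [min_eq_right (by linarith), max_eq_right hb]

lemma continuous_chi {b : ℝ} (hb : 0 ≤ b) : Continuous (chi b) := by
  rw [funext (chi_eq_max_min hb)]
  fun_prop

lemma chi_lt {b x c : ℝ} (hc : 0 < c) (h : x < c) : chi b x < c := by
  unfold chi; split_ifs <;> linarith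

noncomputable def pertStep (b : ℝ) (f g : ℝ → ℝ) (x : ℝ) (q : Bool × ℝ) : ℝ :=
  if q.1 then chi b (f x + q.2) else chi b (g x + q.2)

section Orbit

variable {b : ℝ} {f g : ℝ → ℝ}

lemma pertOrbit_succ (y : ℝ) (n : ℕ) (ω : ℕ → Bool × ℝ) :
    pertOrbit b f g y (n + 1) ω = pertStep b f g (pertOrbit b f g y n ω) (ω n) := rfl

lemma pertStep_eq (x : ℝ) (c : Bool) (ε : ℝ) :
    pertStep b f g x (c, ε) = chi b (cond c f g x + ε) := by
  cases c <;> rfl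

lemma pertStep_mem_Icc (hb : 0 ≤ b) (x : ℝ) (q : Bool × ℝ) : pertStep b f g x q ∈ Icc 0 b := by
  unfold pertStep; split_ifs <;> exact chi_mem_Icc hb _

lemma pertOrbit_mem_Icc (hb : 0 ≤ b) {y : ℝ} (hy : y ∈ Icc 0 b) :
    ∀ n ω, pertOrbit b f g y n ω ∈ Icc 0 b
  | 0, _ => hy
  | _ + 1, _ => pertStep_mem_Icc hb _ _

lemma pertOrbit_add (y : ℝ) (m n : ℕ) (ω : ℕ → Bool × ℝ) :
    pertOrbit b f g y (n + m) ω
      = pertOrbit b f g (pertOrbit b f g y m ω) n (fun k => ω (k + m)) := by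
  induction n with
  | zero => rw [Nat.zero_add]; rfl
  | succ n ih => rw [Nat.add_right_comm, pertOrbit_succ, ih]; rfl

end Orbit

section Cylinder

variable {β : Type*}

def listCylinder : ℕ → List (Set β) → Set (ℕ → β)
  | _, [] => univ
  | n, S :: P => (fun ω => ω n) ⁻¹' S ∩ listCylinder (n + 1) P

lemma mem_listCylinder_shift (P : List (Set β)) (ω : ℕ → β) (n m : ℕ) :
    (fun k => ω (k + m)) ∈ listCylinder n P ↔ ω ∈ listCylinder (n + m) P := by
  induction P generalizing n with
  | nil => simp [listCylinder]
  | cons S P ih =>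
    simp only [listCylinder, mem_inter_iff, mem_preimage, ih, Nat.add_right_comm n 1 m]

end Cylinder

def IsWindow (δ : ℝ) (S : Set (Bool × ℝ)) : Prop :=
  ∃ c l u, -δ ≤ l ∧ l < u ∧ u ≤ δ ∧ S = {c} ×ˢ Ioo l u

def Drives (b : ℝ) (f g : ℝ → ℝ) (P : List (Set (Bool × ℝ))) (V T : Set ℝ) : Prop :=
  ∀ x ∈ V ∩ Icc 0 b, ∀ ω ∈ listCylinder 0 P, pertOrbit b f g x P.length ω ∈ T

def CanDrive (b δ : ℝ) (f g : ℝ → ℝ) (x : ℝ) (T : Set ℝ) : Prop :=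
  ∃ V, IsOpen V ∧ x ∈ V ∧ ∃ P : List (Set (Bool × ℝ)), (∀ S ∈ P, IsWindow δ S) ∧ Drives b f g P V T

section Driving

variable {b δ : ℝ} {f g : ℝ → ℝ} {P : List (Set (Bool × ℝ))} {V T : Set ℝ}

lemma Drives.mono {V' T' : Set ℝ} (h : Drives b f g P V T) (hV : V' ⊆ V) (hT : T ⊆ T') :
    Drives b f g P V' T' :=
  fun x hx ω hω => hT (h x ⟨hV hx.1, hx.2⟩ ω hω)

lemma Drives.cons (hb : 0 ≤ b) {S : Set (Bool × ℝ)} {V' : Set ℝ} (h : Drives b f g P V' T)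
    (hS : ∀ x ∈ V ∩ Icc 0 b, ∀ q ∈ S, pertStep b f g x q ∈ V') :
    Drives b f g (S :: P) V T := by
  rintro x hx ω ⟨hω₀, hω⟩
  rw [List.length_cons, pertOrbit_add x 1]
  exact h _ ⟨hS x hx _ hω₀, pertStep_mem_Icc hb _ _⟩ _ ((mem_listCylinder_shift _ _ 0 1).2 hω)

lemma CanDrive.mono {x : ℝ} {T' : Set ℝ} (h : CanDrive b δ f g x T) (hT : T ⊆ T') :
    CanDrive b δ f g x T' :=
  let ⟨V, hV, hxV, P, hPw, hP⟩ := h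
  ⟨V, hV, hxV, P, hPw, hP.mono subset_rfl hT⟩

lemma canDrive_of_isOpen {x : ℝ} (hV : IsOpen V) (hx : x ∈ V) (hVT : V ∩ Icc 0 b ⊆ T) :
    CanDrive b δ f g x T :=
  ⟨V, hV, hx, [], by simp, fun y hy _ _ => hVT hy⟩

/-- By continuity of `(y, ε) ↦ chi b (φ y + ε)` at `(x, t - v)`, where `φ` is the map with
`φ x = v`, a neighbourhood of `x` and a noise window around `t - v` are sent into the
neighbourhood of `t` that is driven into `T`. -/
lemma canDrive_of_step (hb : 0 ≤ b) (hf : ContinuousOn f (Icc 0 b))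
    (hg : ContinuousOn g (Icc 0 b)) {x v t : ℝ} (hx : x ∈ Icc 0 b) (hv : v = f x ∨ v = g x)
    (ht : t ∈ Icc 0 b) (htv : t ∈ Ioo (v - δ) (v + δ)) (h : CanDrive b δ f g t T) :
    CanDrive b δ f g x T := by
  obtain ⟨V', hV', htV', P, hPw, hP⟩ := h
  obtain ⟨c, rfl⟩ : ∃ c : Bool, v = cond c f g x :=
    hv.elim (fun h => ⟨true, h⟩) (fun h => ⟨false, h⟩)
  have hφ : ContinuousOn (cond c f g) (Icc 0 b) := by cases c <;> assumption
  have hlim : Tendsto (fun p : ℝ × ℝ => chi b (cond c f g p.1 + p.2))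
      (𝓝[Icc 0 b] x ×ˢ 𝓝 (t - cond c f g x)) (𝓝 t) := by
    have h₁ := ((hφ x hx).tendsto.comp tendsto_fst).add
      (tendsto_snd (f := 𝓝[Icc 0 b] x) (g := 𝓝 (t - cond c f g x)))
    rw [add_sub_cancel] at h₁
    exact (chi_of_mem ht ▸ (continuous_chi hb).tendsto t).comp h₁
  obtain ⟨U, hU, W, hW, hUW⟩ := eventually_prod_iff.1 (hlim (hV'.mem_nhds htV'))
  obtain ⟨V, hV, hxV, hVU⟩ := mem_nhdsWithin.1 hU
  obtain ⟨l, u, ⟨hl, hu⟩, hW'⟩ := mem_nhds_iff_exists_Ioo_subset.1 hW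
  obtain ⟨htv₁, htv₂⟩ := htv
  refine ⟨V, hV, hxV, {c} ×ˢ Ioo (max l (-δ)) (min u δ) :: P, ?_, hP.cons hb ?_⟩
  · intro S hS
    rcases List.mem_cons.1 hS with rfl | hS
    · exact ⟨c, _, _, le_max_right _ _,
        max_lt (lt_min (hl.trans hu) (by linarith)) (lt_min (by linarith) (by linarith)),
        min_le_right _ _, rfl⟩
    · exact hPw S hS
  · rintro y hy ⟨c', ε⟩ ⟨hc', hε₁, hε₂⟩
    rw [show c' = c from hc', pertStep_eq]
    exact hUW (hVU hy) (hW' ⟨(le_max_left _ _).trans_lt hε₁, hε₂.trans_le (min_le_left _ _)⟩)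

end Driving

lemma forall_of_potential_step {α : Type*} {p : α → Prop} (V : α → ℝ) {a γ : ℝ} (hγ : 0 < γ)
    (hbase : ∀ x, V x < a → p x) (hstep : ∀ x, a ≤ V x → (∀ y, V y ≤ V x - γ → p y) → p x)
    (x : α) : p x := by
  suffices h : ∀ n : ℕ, ∀ x, V x < a + n * γ → p x by
    obtain ⟨n, hn⟩ := exists_nat_gt ((V x - a) / γ)
    exact h n x (by rw [div_lt_iff₀ hγ] at hn; linarith)
  intro n
  induction n with
  | zero => simpa using hbase
  | succ n ih =>
    intro x hx
    rcases lt_or_ge (V x) a with h | h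
    · exact hbase x h
    · exact hstep x h fun y hy => ih y (by push_cast at hx; linarith)

section Staircases

variable {b δ : ℝ} {f g : ℝ → ℝ}

lemma canDrive_Ico_of_descent (hb : 0 ≤ b) (hδ : 0 < δ) (hf : ContinuousOn f (Icc 0 b))
    (hg : ContinuousOn g (Icc 0 b)) (hfg : ∀ t ∈ Icc 0 b, 0 ≤ min (f t) (g t)) {w c : ℝ}
    (hw : 0 < w) (hcb : c ≤ b) (hdesc : ∀ t ∈ Icc w c, min (f t) (g t) < t + δ) :
    ∀ x ∈ Icc 0 c, CanDrive b δ f g x (Ico 0 w) := by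
  obtain ⟨γ₀, hγ₀, hγ₀le⟩ : ∃ γ₀, 0 < γ₀ ∧ ∀ t ∈ Icc w c, γ₀ ≤ t + δ - min (f t) (g t) :=
    isCompact_Icc.exists_forall_le'
      ((continuousOn_id.add continuousOn_const).sub
        ((hf.inf hg).mono (Icc_subset_Icc hw.le hcb)))
      fun t ht => sub_pos.2 (hdesc t ht)
  have hγ : 0 < min γ₀ w / 2 := by positivity
  have hγ₁ : min γ₀ w / 2 < γ₀ := by linarith [min_le_left γ₀ w]
  have hγ₂ : min γ₀ w / 2 < w := by linarith [min_le_right γ₀ w]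
  refine forall_of_potential_step (p := fun x => x ∈ Icc 0 c → CanDrive b δ f g x (Ico 0 w))
    id hγ (fun x hx _ => canDrive_of_isOpen isOpen_Iio hx fun y hy => ⟨hy.2.1, hy.1⟩) ?_
  rintro t (hwt : w ≤ t) ih ⟨ht₀, htc⟩
  have htI : t ∈ Icc 0 b := ⟨ht₀, htc.trans hcb⟩
  have hm := hγ₀le t ⟨hwt, htc⟩
  have hm₀ := hfg t htI
  obtain ⟨t', h₁, h₂⟩ := exists_between (show max (min (f t) (g t) - δ) 0
      < min (min (f t) (g t) + δ) (t - min γ₀ w / 2) from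
    max_lt (lt_min (by linarith) (by linarith)) (lt_min (by linarith) (by linarith)))
  rw [max_lt_iff] at h₁
  rw [lt_min_iff] at h₂
  exact canDrive_of_step hb hf hg htI (min_choice _ _) ⟨h₁.2.le, by linarith⟩ ⟨h₁.1, h₂.1⟩
    (ih t' h₂.2.le ⟨h₁.2.le, by linarith⟩)

lemma canDrive_Ioo_of_descent (hb : 0 ≤ b) (hδ : 0 < δ) (hf : ContinuousOn f (Icc 0 b))
    (hg : ContinuousOn g (Icc 0 b)) {z w : ℝ} (hz : 0 ≤ z) (hzw : z < w)
    (hdesc : ∀ t ∈ Icc w b, z ≤ min (f t) (g t) ∧ min (f t) (g t) < t) :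
    ∀ x ∈ Ioc z b, CanDrive b δ f g x (Ioo z w) := by
  have hγ : 0 < min δ (w - z) / 2 := by have := sub_pos.2 hzw; positivity
  have hγ₁ : min δ (w - z) / 2 < δ := by linarith [min_le_left δ (w - z)]
  have hγ₂ : min δ (w - z) / 2 < w - z := by linarith [min_le_right δ (w - z), sub_pos.2 hzw]
  refine forall_of_potential_step (p := fun x => x ∈ Ioc z b → CanDrive b δ f g x (Ioo z w))
    id hγ (fun x hx hxz => canDrive_of_isOpen isOpen_Ioo ⟨hxz.1, hx⟩ inter_subset_left) ?_
  rintro t (hwt : w ≤ t) ih ⟨hzt, htb⟩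
  have htI : t ∈ Icc 0 b := ⟨hz.trans hzt.le, htb⟩
  obtain ⟨hm₁, hm₂⟩ := hdesc t ⟨hwt, htb⟩
  obtain ⟨t', h₁, h₂⟩ := exists_between (show max (min (f t) (g t) - δ) z
      < min (min (f t) (g t) + δ) (t - min δ (w - z) / 2) from
    max_lt (lt_min (by linarith) (by linarith)) (lt_min (by linarith) (by linarith)))
  rw [max_lt_iff] at h₁
  rw [lt_min_iff] at h₂
  exact canDrive_of_step hb hf hg htI (min_choice _ _) ⟨by linarith, by linarith⟩ ⟨h₁.1, h₂.1⟩
    (ih t' h₂.2.le ⟨h₁.2, by linarith⟩)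

lemma canDrive_Ioo_of_ascent (hb : 0 ≤ b) (hδ : 0 < δ) (hf : ContinuousOn f (Icc 0 b))
    (hg : ContinuousOn g (Icc 0 b)) {a z w : ℝ} (ha : 0 ≤ a) (hzw : z < w) (hwb : w ≤ b)
    (hasc : ∀ t ∈ Icc a z, t < max (f t) (g t) + δ ∧ max (f t) (g t) < w) :
    ∀ x ∈ Ico a w, CanDrive b δ f g x (Ioo z w) := by
  obtain ⟨γ₀, hγ₀, hγ₀le⟩ : ∃ γ₀, 0 < γ₀ ∧ ∀ t ∈ Icc a z, γ₀ ≤ max (f t) (g t) + δ - t :=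
    isCompact_Icc.exists_forall_le'
      (((hf.sup hg).mono (Icc_subset_Icc ha (hzw.le.trans hwb))).add continuousOn_const
        |>.sub continuousOn_id)
      fun t ht => sub_pos.2 (hasc t ht).1
  have hγ : 0 < min γ₀ (w - z) / 2 := by have := sub_pos.2 hzw; positivity
  have hγ₁ : min γ₀ (w - z) / 2 < γ₀ := by linarith [min_le_left γ₀ (w - z)]
  have hγ₂ : min γ₀ (w - z) / 2 < w - z := by
    linarith [min_le_right γ₀ (w - z), sub_pos.2 hzw]
  refine forall_of_potential_step (p := fun x => x ∈ Ico a w → CanDrive b δ f g x (Ioo z w))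
    (fun x => -x) (a := -z) hγ
    (fun x hx hxw => canDrive_of_isOpen isOpen_Ioo ⟨neg_lt_neg_iff.1 hx, hxw.2⟩
      inter_subset_left) ?_
  rintro t hzt ih ⟨hat, htw⟩
  have htz : t ≤ z := neg_le_neg_iff.1 hzt
  have htI : t ∈ Icc 0 b := ⟨ha.trans hat, htw.le.trans hwb⟩
  have hm := hγ₀le t ⟨hat, htz⟩
  have hM := (hasc t ⟨hat, htz⟩).2
  obtain ⟨t', h₁, h₂⟩ := exists_between (show max (max (f t) (g t) - δ) (t + min γ₀ (w - z) / 2)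
      < min (max (f t) (g t) + δ) w from
    max_lt (lt_min (by linarith) (by linarith)) (lt_min (by linarith) (by linarith)))
  rw [max_lt_iff] at h₁
  rw [lt_min_iff] at h₂
  exact canDrive_of_step hb hf hg htI (max_choice _ _) ⟨by linarith, by linarith⟩ ⟨h₁.1, h₂.1⟩
    (ih t' (by linarith) ⟨by linarith, h₂.2⟩)

lemma canDrive_union_of_regions (hb : 0 ≤ b) (hδ : 0 < δ)
    (hf : ContinuousOn f (Icc 0 b)) (hg : ContinuousOn g (Icc 0 b))
    (hfg : ∀ t ∈ Icc 0 b, 0 ≤ min (f t) (g t)) {a w₁ w₂ z w₃ : ℝ} (hw₁ : 0 < w₁)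
    (haw : a < w₂) (hz : 0 ≤ z) (hzw : z < w₃) (hw₃ : w₃ ≤ b)
    (hL : ∀ t ∈ Ico w₁ w₂, min (f t) (g t) < t + δ)
    (hA : ∀ t ∈ Icc a z, t < max (f t) (g t) + δ ∧ max (f t) (g t) < w₃)
    (hD : ∀ t ∈ Icc w₃ b, z ≤ min (f t) (g t) ∧ min (f t) (g t) < t) :
    ∀ x ∈ Icc 0 b, CanDrive b δ f g x (Ico 0 w₁ ∪ Ioo z w₃) := by
  intro x hx
  rcases lt_or_ge x w₂ with hxw | hwx
  · exact (canDrive_Ico_of_descent hb hδ hf hg hfg hw₁ hx.2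
      (fun t ht => hL t ⟨ht.1, ht.2.trans_lt hxw⟩) x ⟨hx.1, le_rfl⟩).mono subset_union_left
  rcases le_or_gt x z with hxz | hzx
  · exact (canDrive_Ioo_of_ascent hb hδ hf hg hx.1 hzw hw₃
      (fun t ht => hA t ⟨by linarith [ht.1], ht.2⟩) x ⟨le_rfl, hxz.trans_lt hzw⟩).mono
      subset_union_right
  · exact (canDrive_Ioo_of_descent hb hδ hf hg hz hzw hD x ⟨hzx, hx.2⟩).mono subset_union_right

end Staircases

def IsTrap (b δ : ℝ) (f g : ℝ → ℝ) (T : Set ℝ) : Prop :=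
  ∀ x ∈ T, ∀ q : Bool × ℝ, q.2 ∈ Ioo (-δ) δ → pertStep b f g x q ∈ T

section Traps

variable {b δ : ℝ} {f g : ℝ → ℝ}

lemma IsTrap.pertOrbit_mem {T : Set ℝ} (hT : IsTrap b δ f g T) {y : ℝ} {ω : ℕ → Bool × ℝ}
    (hω : ∀ k, (ω k).2 ∈ Ioo (-δ) δ) {N : ℕ} (hN : pertOrbit b f g y N ω ∈ T) :
    ∀ n ≥ N, pertOrbit b f g y n ω ∈ T := by
  intro n hn
  induction n, hn using Nat.le_induction with
  | base => exact hN
  | succ n _ ih => exact hT _ ih _ (hω n)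

lemma min_le_cond (c : Bool) (x : ℝ) : min (f x) (g x) ≤ cond c f g x := by
  cases c
  exacts [min_le_right _ _, min_le_left _ _]

lemma cond_le_max (c : Bool) (x : ℝ) : cond c f g x ≤ max (f x) (g x) := by
  cases c
  exacts [le_max_right _ _, le_max_left _ _]

lemma isTrap_Ico (hf : MonotoneOn f (Icc 0 b)) (hg : MonotoneOn g (Icc 0 b)) {w : ℝ}
    (hw : w ∈ Ioc 0 b) (hfgw : δ ≤ min (w - f w) (w - g w)) : IsTrap b δ f g (Ico 0 w) := by
  rw [min_sub_sub_left] at hfgw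
  rintro x ⟨hx₀, hxw⟩ ⟨c, ε⟩ ⟨-, hε⟩
  have hxI : x ∈ Icc 0 b := ⟨hx₀, hxw.le.trans hw.2⟩
  have hwI : w ∈ Icc 0 b := ⟨hw.1.le, hw.2⟩
  have hx := (cond_le_max c x).trans (max_le_max (hf hxI hwI hxw.le) (hg hxI hwI hxw.le))
  rw [pertStep_eq]
  exact ⟨(chi_mem_Icc (hwI.1.trans hwI.2) _).1, chi_lt hw.1 (by dsimp only at hε; linarith)⟩

lemma isTrap_Ioo (hf : MonotoneOn f (Icc 0 b)) (hg : MonotoneOn g (Icc 0 b)) {z w : ℝ}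
    (hz : 0 ≤ z) (hwb : w ≤ b) (hfgz : δ ≤ min (f z - z) (g z - z))
    (hfgw : δ ≤ min (w - f w) (w - g w)) : IsTrap b δ f g (Ioo z w) := by
  rw [min_sub_sub_right] at hfgz
  rw [min_sub_sub_left] at hfgw
  rintro x ⟨hzx, hxw⟩ ⟨c, ε⟩ ⟨hε₁, hε₂⟩
  have hxI : x ∈ Icc 0 b := ⟨hz.trans hzx.le, hxw.le.trans hwb⟩
  have hzI : z ∈ Icc 0 b := ⟨hz, hzx.le.trans hxI.2⟩
  have hwI : w ∈ Icc 0 b := ⟨hxI.1.trans hxw.le, hwb⟩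
  have hx₁ := (min_le_min (hf hzI hxI hzx.le) (hg hzI hxI hzx.le)).trans (min_le_cond c x)
  have hx₂ := (cond_le_max c x).trans (max_le_max (hf hxI hwI hxw.le) (hg hxI hwI hxw.le))
  dsimp only at hε₁ hε₂
  rw [pertStep_eq, chi_of_mem ⟨by linarith, by linarith⟩]
  exact ⟨by linarith, by linarith⟩

end Traps

lemma measure_iInter_compl_eq_zero_of_le_mul {Ω : Type*} {m : MeasurableSpace Ω}
    {μ : Measure Ω} [IsFiniteMeasure μ] {ℱ : ℕ → MeasurableSpace Ω} (hℱ : Monotone ℱ)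
    {B : ℕ → Set Ω} (hB : ∀ j, MeasurableSet[ℱ (j + 1)] (B j)) {q : ℝ≥0∞} (hq : q < 1)
    (hstep : ∀ j S, MeasurableSet[ℱ j] S → μ (S \ B j) ≤ q * μ S) :
    μ (⋂ j, (B j)ᶜ) = 0 := by
  have key : ∀ K, MeasurableSet[ℱ K] (⋂ j ∈ Finset.range K, (B j)ᶜ) ∧
      μ (⋂ j ∈ Finset.range K, (B j)ᶜ) ≤ q ^ K * μ univ := by
    intro K
    induction K with
    | zero => simp
    | succ K ih =>
      rw [Finset.range_add_one, Finset.set_biInter_insert, inter_comm, ← sdiff_eq]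
      refine ⟨(hℱ K.le_succ _ ih.1).diff (hB K), ?_⟩
      calc _ ≤ q * μ (⋂ j ∈ Finset.range K, (B j)ᶜ) := hstep K _ ih.1
        _ ≤ q * (q ^ K * μ univ) := by gcongr; exact ih.2
        _ = q ^ (K + 1) * μ univ := by ring
  have hlim : Tendsto (fun K => q ^ K * μ univ) atTop (𝓝 0) := by
    simpa using ENNReal.Tendsto.mul_const (ENNReal.tendsto_pow_atTop_nhds_zero_of_lt_one hq)
      (Or.inr (measure_ne_top μ univ))
  refine le_antisymm (ge_of_tendsto' hlim fun K => (measure_mono ?_).trans (key K).2) zero_le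
  exact fun ω hω => mem_iInter₂.2 fun j _ => mem_iInter.1 hω j

section SequenceSpace

variable {β : Type*} [MeasurableSpace β]

@[reducible]
def pastSigma (n : ℕ) : MeasurableSpace (ℕ → β) :=
  ⨆ i ∈ Iio n, MeasurableSpace.comap (fun ω : ℕ → β => ω i) inferInstance

@[reducible]
def futureSigma (n : ℕ) : MeasurableSpace (ℕ → β) :=
  ⨆ i ∈ Ici n, MeasurableSpace.comap (fun ω : ℕ → β => ω i) inferInstance

lemma pastSigma_le (n : ℕ) : pastSigma n ≤ (MeasurableSpace.pi : MeasurableSpace (ℕ → β)) :=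
  iSup₂_le fun i _ => measurable_iff_comap_le.1 (measurable_pi_apply i)

lemma pastSigma_mono : Monotone (pastSigma (β := β)) :=
  fun _ _ h => biSup_mono fun _ hi => lt_of_lt_of_le hi h

lemma futureSigma_anti : Antitone (futureSigma (β := β)) :=
  fun _ _ h => biSup_mono fun _ hi => le_trans h hi

lemma measurable_pastSigma_apply {i n : ℕ} (h : i < n) :
    Measurable[pastSigma n] (fun ω : ℕ → β => ω i) :=
  measurable_iff_comap_le.2 <| le_iSup₂
    (f := fun i (_ : i ∈ Iio n) => MeasurableSpace.comap (fun ω : ℕ → β => ω i) inferInstance) i h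

lemma measurable_futureSigma_apply {i n : ℕ} (h : n ≤ i) :
    Measurable[futureSigma n] (fun ω : ℕ → β => ω i) :=
  measurable_iff_comap_le.2 <| le_iSup₂
    (f := fun i (_ : i ∈ Ici n) => MeasurableSpace.comap (fun ω : ℕ → β => ω i) inferInstance) i h

lemma indep_pastSigma_futureSigma {μ : Measure (ℕ → β)} (hindep : iIndepFun (fun n ω => ω n) μ)
    (n : ℕ) : Indep (pastSigma n) (futureSigma n) μ := by
  have := indep_biSup_compl (fun i => measurable_iff_comap_le.1 (measurable_pi_apply i))
    hindep.iIndep (Iio n)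
  rwa [compl_Iio] at this

variable {P : List (Set β)}

lemma measurableSet_listCylinder_pastSigma (hP : ∀ S ∈ P, MeasurableSet S) {n m : ℕ}
    (h : n + P.length ≤ m) : MeasurableSet[pastSigma m] (listCylinder n P) := by
  induction P generalizing n with
  | nil => exact MeasurableSet.univ
  | cons S P ih =>
    rw [List.forall_mem_cons] at hP
    rw [List.length_cons] at h
    exact (measurable_pastSigma_apply (by omega) hP.1).inter (ih hP.2 (by omega))

lemma measurableSet_listCylinder_futureSigma (hP : ∀ S ∈ P, MeasurableSet S) (n : ℕ) :
    MeasurableSet[futureSigma n] (listCylinder n P) := by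
  induction P generalizing n with
  | nil => exact MeasurableSet.univ
  | cons S P ih =>
    rw [List.forall_mem_cons] at hP
    exact (measurable_futureSigma_apply le_rfl hP.1).inter
      (futureSigma_anti n.le_succ _ (ih hP.2 (n + 1)))

lemma measurableSet_listCylinder (hP : ∀ S ∈ P, MeasurableSet S) (n : ℕ) :
    MeasurableSet (listCylinder n P) :=
  pastSigma_le _ _ (measurableSet_listCylinder_pastSigma hP le_rfl)

variable {μ : Measure (ℕ → β)} [IsProbabilityMeasure μ] {ρ : Measure β}

lemma measure_listCylinder (hindep : iIndepFun (fun n ω => ω n) μ)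
    (hlaw : ∀ n, μ.map (fun ω => ω n) = ρ) (hP : ∀ S ∈ P, MeasurableSet S) (n : ℕ) :
    μ (listCylinder n P) = (P.map ρ).prod := by
  induction P generalizing n with
  | nil => simp [listCylinder]
  | cons S P ih =>
    rw [List.forall_mem_cons] at hP
    have hind := indep_iSup_of_disjoint
      (fun i => measurable_iff_comap_le.1 (measurable_pi_apply i)) hindep.iIndep
      (S := {n}) (T := Ici (n + 1)) (by simp)
    rw [listCylinder,
      (Indep_iff _ _ μ).1 hind _ _ ?_ (measurableSet_listCylinder_futureSigma hP.2 _),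
      ih hP.2, ← Measure.map_apply (measurable_pi_apply n) hP.1, hlaw n, List.map_cons,
      List.prod_cons]
    exact le_iSup₂ (f := fun i (_ : i ∈ ({n} : Set ℕ)) =>
      MeasurableSpace.comap (fun ω : ℕ → β => ω i) inferInstance) n rfl _ ⟨S, hP.1, rfl⟩

lemma measure_diff_listCylinder_le (hindep : iIndepFun (fun n ω => ω n) μ) {n : ℕ}
    {s : Finset ℕ} {P : ℕ → List (Set β)} (hP : ∀ k, ∀ S ∈ P k, MeasurableSet S) {q : ℝ≥0∞}
    (hq : ∀ k ∈ s, 1 - μ (listCylinder n (P k)) ≤ q) {Z : (ℕ → β) → ℕ}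
    (hZ : Measurable[pastSigma n] Z) (hZs : ∀ ω, Z ω ∈ s) {S : Set (ℕ → β)}
    (hS : MeasurableSet[pastSigma n] S) :
    μ (S \ {ω | ω ∈ listCylinder n (P (Z ω))}) ≤ q * μ S := by
  have hSZ : ∀ k, MeasurableSet[pastSigma n] (S ∩ Z ⁻¹' {k}) :=
    fun k => hS.inter (hZ (measurableSet_singleton k))
  have hsum : μ S = ∑ k ∈ s, μ (S ∩ Z ⁻¹' {k}) := by
    rw [← measure_biUnion_finset
      (fun i hi j hj hij => ((pairwiseDisjoint_fiber Z s) hi hj hij).mono inter_subset_right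
        inter_subset_right) fun k _ => pastSigma_le n _ (hSZ k)]
    congr 1
    ext ω
    simpa using fun _ => hZs ω
  calc μ (S \ {ω | ω ∈ listCylinder n (P (Z ω))})
      ≤ μ (⋃ k ∈ s, (S ∩ Z ⁻¹' {k}) ∩ (listCylinder n (P k))ᶜ) := by
        refine measure_mono fun ω ⟨hωS, hω⟩ => mem_iUnion₂.2 ⟨Z ω, hZs ω, ⟨hωS, rfl⟩, hω⟩
    _ ≤ ∑ k ∈ s, μ ((S ∩ Z ⁻¹' {k}) ∩ (listCylinder n (P k))ᶜ) := measure_biUnion_finset_le _ _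
    _ = ∑ k ∈ s, μ (S ∩ Z ⁻¹' {k}) * (1 - μ (listCylinder n (P k))) := by
        refine Finset.sum_congr rfl fun k _ => ?_
        rw [(Indep_iff _ _ μ).1 (indep_pastSigma_futureSigma hindep n) _ _ (hSZ k)
          (measurableSet_listCylinder_futureSigma (hP k) n).compl,
          prob_compl_eq_one_sub (measurableSet_listCylinder (hP k) n)]
    _ ≤ ∑ k ∈ s, μ (S ∩ Z ⁻¹' {k}) * q := by gcongr with k hk; exact hq k hk
    _ = q * μ S := by rw [← Finset.sum_mul, ← hsum, mul_comm]

theorem ae_exists_mem_listCylinder (hindep : iIndepFun (fun n ω => ω n) μ)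
    (hlaw : ∀ n, μ.map (fun ω => ω n) = ρ) {s : Finset ℕ} {P : ℕ → List (Set β)}
    (hPm : ∀ k, ∀ S ∈ P k, MeasurableSet S) (hPpos : ∀ k ∈ s, ∀ S ∈ P k, 0 < ρ S) {N : ℕ}
    (hN : ∀ k ∈ s, (P k).length ≤ N) {Z : ℕ → (ℕ → β) → ℕ}
    (hZ : ∀ n, Measurable[pastSigma n] (Z n)) (hZs : ∀ n ω, Z n ω ∈ s) :
    ∀ᵐ ω ∂μ, ∃ j, ω ∈ listCylinder (j * N) (P (Z (j * N) ω)) := by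
  have hq : s.sup (fun k => 1 - ((P k).map ρ).prod) < 1 :=
    (Finset.sup_lt_iff (by simp)).2 fun k hk => ENNReal.sub_lt_self ENNReal.one_ne_top
      one_ne_zero (CanonicallyOrderedAdd.list_prod_pos.2 (by simpa using hPpos k hk)).ne'
  have hB : ∀ j, {ω | ω ∈ listCylinder (j * N) (P (Z (j * N) ω))}
      = ⋃ k ∈ s, Z (j * N) ⁻¹' {k} ∩ listCylinder (j * N) (P k) := by
    intro j
    ext ω
    simp only [mem_ofPred_eq, mem_iUnion, mem_inter_iff, mem_preimage, mem_singleton_iff,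
      exists_prop]
    exact ⟨fun h => ⟨_, hZs _ _, rfl, h⟩, fun ⟨k, _, hk, h⟩ => hk ▸ h⟩
  have hnull := measure_iInter_compl_eq_zero_of_le_mul (μ := μ)
    (ℱ := fun j => pastSigma (j * N)) (fun i j h => pastSigma_mono (Nat.mul_le_mul_right N h))
    (B := fun j => {ω | ω ∈ listCylinder (j * N) (P (Z (j * N) ω))}) ?_ hq ?_
  · rw [ae_iff]
    convert hnull using 2
    ext ω
    simp
  · intro j
    rw [hB]
    refine MeasurableSet.biUnion s.countable_toSet fun k hk => MeasurableSet.inter ?_ ?_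
    · exact pastSigma_mono (by nlinarith) _ (hZ _ (measurableSet_singleton k))
    · exact measurableSet_listCylinder_pastSigma (hPm k)
        (by rw [add_mul, one_mul]; linarith [hN k hk])
  · intro j S hS
    refine measure_diff_listCylinder_le hindep hPm (fun k hk => ?_) (hZ _) (hZs _) hS
    rw [measure_listCylinder hindep hlaw (hPm k)]
    exact Finset.le_sup (f := fun k => 1 - ((P k).map ρ).prod) hk

end SequenceSpace

lemma ae_forall_apply {β : Type*} [MeasurableSpace β] {μ : Measure (ℕ → β)} {ρ : Measure β}
    (hlaw : ∀ n, μ.map (fun ω => ω n) = ρ) {p : β → Prop} (hp : ∀ᵐ x ∂ρ, p x) :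
    ∀ᵐ ω ∂μ, ∀ k, p (ω k) :=
  ae_all_iff.2 fun k => ae_of_ae_map (measurable_pi_apply k).aemeasurable (hlaw k ▸ hp)

lemma IsWindow.measurableSet {δ : ℝ} {S : Set (Bool × ℝ)} (hS : IsWindow δ S) :
    MeasurableSet S := by
  obtain ⟨c, l, u, -, -, -, rfl⟩ := hS
  exact (measurableSet_singleton c).prod measurableSet_Ioo

section Absorption

variable {b δ : ℝ} {f g : ℝ → ℝ}

lemma measurable_pertOrbit (hb : 0 ≤ b) (hf : ContinuousOn f (Icc 0 b))
    (hg : ContinuousOn g (Icc 0 b)) {y : ℝ} (hy : y ∈ Icc 0 b) (n : ℕ) :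
    Measurable[pastSigma n] (pertOrbit b f g y n) := by
  induction n with
  | zero => exact measurable_const
  | succ n ih =>
    have hstep : Measurable fun p : Icc (0 : ℝ) b × (Bool × ℝ) => pertStep b f g p.1 p.2 :=
      Measurable.ite (measurable_snd.fst (measurableSet_singleton true))
        ((continuous_chi hb).measurable.comp
          ((hf.domRestrict.measurable.comp measurable_fst).add measurable_snd.snd))
        ((continuous_chi hb).measurable.comp
          ((hg.domRestrict.measurable.comp measurable_fst).add measurable_snd.snd))
    exact hstep.comp (((ih.mono (pastSigma_mono n.le_succ) le_rfl).subtype_mk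
      (h := pertOrbit_mem_Icc hb hy n)).prodMk (measurable_pastSigma_apply n.lt_succ_self))

/-- With `r` a Lebesgue number of the cover by driving neighbourhoods, all points of a cell
`[k r, (k + 1) r)` can use the pattern chosen for its left end `k r`. -/
lemma exists_measurable_drives {T : Set ℝ}
    (h : ∀ x ∈ Icc 0 b, CanDrive b δ f g x T) :
    ∃ (κ : ℝ → ℕ) (K : ℕ) (P : ℕ → List (Set (Bool × ℝ))), Measurable κ ∧ (∀ x, κ x ≤ K) ∧
      (∀ k, ∀ S ∈ P k, IsWindow δ S) ∧ ∀ x ∈ Icc 0 b, Drives b f g (P (κ x)) {x} T := by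
  have h' : ∀ x, ∃ V, IsOpen V ∧ (x ∈ Icc 0 b → x ∈ V) ∧ ∃ P : List (Set (Bool × ℝ)),
      (∀ S ∈ P, IsWindow δ S) ∧ Drives b f g P V T := by
    intro x
    by_cases hx : x ∈ Icc 0 b
    · obtain ⟨V, hV, hxV, hP⟩ := h x hx
      exact ⟨V, hV, fun _ => hxV, hP⟩
    · exact ⟨∅, isOpen_empty, fun h => (hx h).elim, [], by simp, fun y hy => hy.1.elim⟩
  choose V hV hxV P hPw hP using h'
  obtain ⟨r, hr, hball⟩ := lebesgue_number_lemma_of_metric isCompact_Icc hV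
    fun x hx => mem_iUnion.2 ⟨x, hxV x hx⟩
  have hsel : ∀ c, ∃ i, c ∈ Icc 0 b → Metric.ball c r ⊆ V i := by
    intro c
    by_cases hc : c ∈ Icc 0 b
    · obtain ⟨i, hi⟩ := hball c hc
      exact ⟨i, fun _ => hi⟩
    · exact ⟨0, fun h => (hc h).elim⟩
  choose sel hsel using hsel
  refine ⟨fun x => min ⌊x / r⌋₊ ⌊b / r⌋₊, ⌊b / r⌋₊, fun k => P (sel (k * r)),
    (measurable_from_nat (f := fun k => min k ⌊b / r⌋₊)).comp
      (Nat.measurable_floor.comp (measurable_id.div_const r)),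
    fun x => min_le_right _ _, fun k => hPw _, fun x hx => ?_⟩
  have hk : ⌊x / r⌋₊ ≤ ⌊b / r⌋₊ := Nat.floor_le_floor (div_le_div_of_nonneg_right hx.2 hr.le)
  simp only [min_eq_left hk]
  have h₁ : (⌊x / r⌋₊ : ℝ) * r ≤ x := (le_div_iff₀ hr).1 (Nat.floor_le (div_nonneg hx.1 hr.le))
  have h₂ : x < (⌊x / r⌋₊ : ℝ) * r + r := by
    have := Nat.lt_floor_add_one (x / r)
    rw [div_lt_iff₀ hr] at this
    linarith
  refine (hP _).mono (singleton_subset_iff.2 (hsel _ ⟨by positivity, h₁.trans hx.2⟩ ?_)) subset_rfl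
  rw [Metric.mem_ball, Real.dist_eq, abs_lt]
  constructor <;> linarith

variable {μ : Measure (ℕ → Bool × ℝ)} [IsProbabilityMeasure μ] {ρ : Measure (Bool × ℝ)}

theorem ae_exists_pertOrbit_mem (hindep : iIndepFun (fun n ω => ω n) μ)
    (hlaw : ∀ n, μ.map (fun ω => ω n) = ρ) (hwin : ∀ S, IsWindow δ S → 0 < ρ S) (hb : 0 ≤ b)
    (hf : ContinuousOn f (Icc 0 b)) (hg : ContinuousOn g (Icc 0 b)) {T : Set ℝ}
    (hcover : ∀ x ∈ Icc 0 b, CanDrive b δ f g x T) {y : ℝ} (hy : y ∈ Icc 0 b) :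
    ∀ᵐ ω ∂μ, ∃ n, pertOrbit b f g y n ω ∈ T := by
  obtain ⟨κ, K, P, hκ, hκK, hPw, hP⟩ := exists_measurable_drives hcover
  filter_upwards [ae_exists_mem_listCylinder hindep hlaw (s := Finset.range (K + 1))
    (fun k S hS => (hPw k S hS).measurableSet) (fun k _ S hS => hwin S (hPw k S hS))
    (fun k hk => Finset.le_sup (f := fun k => (P k).length) hk)
    (fun n => hκ.comp (measurable_pertOrbit hb hf hg hy n))
    (fun n ω => Finset.mem_range.2 (Nat.lt_succ_of_le (hκK _)))] with ω ⟨j, hj⟩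
  set N := (Finset.range (K + 1)).sup fun k => (P k).length
  refine ⟨(P (κ (pertOrbit b f g y (j * N) ω))).length + j * N, ?_⟩
  rw [pertOrbit_add]
  exact hP _ (pertOrbit_mem_Icc hb hy _ ω) _ ⟨rfl, pertOrbit_mem_Icc hb hy _ ω⟩ _
    ((mem_listCylinder_shift _ _ 0 _).2 (by rwa [Nat.zero_add]))

lemma measurableSet_eventually_pertOrbit_mem (hb : 0 ≤ b) (hf : ContinuousOn f (Icc 0 b))
    (hg : ContinuousOn g (Icc 0 b)) {y : ℝ} (hy : y ∈ Icc 0 b) {T : Set ℝ}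
    (hT : MeasurableSet T) :
    MeasurableSet {ω | ∃ n₀ : ℕ, ∀ n ≥ n₀, pertOrbit b f g y n ω ∈ T} := by
  simp only [ofPred_exists, ofPred_forall]
  exact .iUnion fun _ => .iInter fun n => .iInter fun _ =>
    pastSigma_le n _ (measurable_pertOrbit hb hf hg hy n hT)

lemma measure_eventually_pertOrbit_mem_pos (hindep : iIndepFun (fun n ω => ω n) μ)
    (hlaw : ∀ n, μ.map (fun ω => ω n) = ρ) (hwin : ∀ S, IsWindow δ S → 0 < ρ S)
    (hnoise : ∀ᵐ q ∂ρ, q.2 ∈ Ioo (-δ) δ) {T : Set ℝ} (hT : IsTrap b δ f g T) {y : ℝ}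
    (hy : y ∈ Icc 0 b) (h : CanDrive b δ f g y T) :
    0 < μ {ω | ∃ n₀ : ℕ, ∀ n ≥ n₀, pertOrbit b f g y n ω ∈ T} := by
  obtain ⟨V, -, hyV, P, hPw, hP⟩ := h
  have hPm : ∀ S ∈ P, MeasurableSet S := fun S hS => (hPw S hS).measurableSet
  calc 0 < μ (listCylinder 0 P) := by
        rw [measure_listCylinder hindep hlaw hPm, CanonicallyOrderedAdd.list_prod_pos]
        simpa using fun S hS => hwin S (hPw S hS)
    _ ≤ _ := measure_mono_ae <| (ae_forall_apply hlaw hnoise).mono fun ω hω hωP =>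
        ⟨P.length, hT.pertOrbit_mem hω (hP y ⟨hyV, hy⟩ ω hωP)⟩

theorem measure_eventually_pertOrbit_mem_add_eq_one (hindep : iIndepFun (fun n ω => ω n) μ)
    (hlaw : ∀ n, μ.map (fun ω => ω n) = ρ) (hwin : ∀ S, IsWindow δ S → 0 < ρ S)
    (hnoise : ∀ᵐ q ∂ρ, q.2 ∈ Ioo (-δ) δ) (hb : 0 ≤ b) (hf : ContinuousOn f (Icc 0 b))
    (hg : ContinuousOn g (Icc 0 b)) {T₀ T₁ : Set ℝ} (hT₀ : IsTrap b δ f g T₀)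
    (hT₁ : IsTrap b δ f g T₁) (hT₀m : MeasurableSet T₀) (hT₁m : MeasurableSet T₁)
    (hdisj : Disjoint T₀ T₁) (hcover : ∀ x ∈ Icc 0 b, CanDrive b δ f g x (T₀ ∪ T₁)) {y : ℝ}
    (hy : y ∈ Icc 0 b) :
    μ {ω | ∃ n₀ : ℕ, ∀ n ≥ n₀, pertOrbit b f g y n ω ∈ T₀} +
      μ {ω | ∃ n₀ : ℕ, ∀ n ≥ n₀, pertOrbit b f g y n ω ∈ T₁} = 1 := by
  have hE₀ := measurableSet_eventually_pertOrbit_mem hb hf hg hy hT₀m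
  have hE₁ := measurableSet_eventually_pertOrbit_mem hb hf hg hy hT₁m
  have hdisjE : Disjoint {ω | ∃ n₀ : ℕ, ∀ n ≥ n₀, pertOrbit b f g y n ω ∈ T₀}
      {ω | ∃ n₀ : ℕ, ∀ n ≥ n₀, pertOrbit b f g y n ω ∈ T₁} := by
    rw [Set.disjoint_left]
    rintro ω ⟨n₀, h₀⟩ ⟨n₁, h₁⟩
    exact hdisj.ne_of_mem (h₀ _ (le_max_left n₀ n₁)) (h₁ _ (le_max_right n₀ n₁)) rfl
  rw [← measure_union hdisjE hE₁, ← prob_compl_eq_zero_iff (hE₀.union hE₁)]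
  refine ae_iff.1 ?_
  filter_upwards [ae_exists_pertOrbit_mem hindep hlaw hwin hb hf hg hcover hy,
    ae_forall_apply hlaw hnoise] with ω ⟨n, hn⟩ hω
  rcases hn with hn | hn
  exacts [Or.inl ⟨n, hT₀.pertOrbit_mem hω hn⟩, Or.inr ⟨n, hT₁.pertOrbit_mem hω hn⟩]

end Absorption

lemma ae_snd_mem_of_measure_eq_one {α γ : Type*} [MeasurableSpace α] [MeasurableSpace γ]
    {π : Measure α} [IsProbabilityMeasure π] {ν : Measure γ} [IsProbabilityMeasure ν]
    {s : Set γ} (hs : MeasurableSet s) (hν : ν s = 1) : ∀ᵐ q ∂(π.prod ν), q.2 ∈ s := by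
  refine ae_of_ae_map measurable_snd.aemeasurable ?_
  rw [Measure.map_snd_prod, measure_univ, one_smul,
    ae_mem_iff_measure_eq hs.nullMeasurableSet, hν, measure_univ]

lemma prod_pos_of_isWindow {δ : ℝ} {π : Measure Bool} (hπ : ∀ c, 0 < π {c}) {ν : Measure ℝ}
    [SFinite ν] (hν : ∀ a c : ℝ, -δ ≤ a → a < c → c ≤ δ → 0 < ν (Ioo a c))
    {S : Set (Bool × ℝ)} (hS : IsWindow δ S) : 0 < (π.prod ν) S := by
  obtain ⟨c, l, u, h₁, h₂, h₃, rfl⟩ := hS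
  rw [Measure.prod_prod]
  exact ENNReal.mul_pos (hπ c).ne' (hν l u h₁ h₂ h₃).ne'

lemma PMF.bernoulli_toMeasure_singleton_pos {p : NNReal} (h : p ≤ 1) (h₀ : 0 < p) (h₁ : p < 1)
    (c : Bool) : 0 < (PMF.bernoulli p h).toMeasure {c} := by
  rw [PMF.toMeasure_apply_singleton _ _ (measurableSet_singleton _), PMF.bernoulli_apply]
  cases c
  · exact tsub_pos_iff_lt.2 (ENNReal.coe_lt_one_iff.2 h₁)
  · exact ENNReal.coe_pos.2 h₀

section AlleeMap

variable {b A K : ℝ} {f : ℝ → ℝ}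

lemma IsIncAlleeMap.continuousOn (hf : IsIncAlleeMap b A K f) : ContinuousOn f (Icc 0 b) :=
  hf.2.2.2.2.1

lemma IsIncAlleeMap.monotoneOn (hf : IsIncAlleeMap b A K f) : MonotoneOn f (Icc 0 b) :=
  hf.2.2.2.2.2.1.monotoneOn

lemma IsIncAlleeMap.nonneg (hf : IsIncAlleeMap b A K f) {x : ℝ} (hx : x ∈ Icc 0 b) :
    0 ≤ f x :=
  (hf.2.2.2.1 hx).1

lemma IsIncAlleeMap.le_self (hf : IsIncAlleeMap b A K f) {x : ℝ} (hx : x ∈ Icc 0 A) :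
    f x ≤ x := by
  obtain ⟨-, -, -, -, -, -, h₀, hA, -, hlt, -⟩ := hf
  rcases hx.1.eq_or_lt with rfl | hx₀
  · exact h₀.le
  rcases hx.2.eq_or_lt with rfl | hxA
  · exact hA.le
  exact (hlt x (Or.inl ⟨hx₀, hxA⟩)).le

lemma IsIncAlleeMap.self_le (hf : IsIncAlleeMap b A K f) {x : ℝ} (hx : x ∈ Icc A K) :
    x ≤ f x := by
  obtain ⟨-, -, -, -, -, -, -, hA, hK, -, hgt⟩ := hf
  rcases hx.1.eq_or_lt with rfl | hAx
  · exact hA.ge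
  rcases hx.2.eq_or_lt with rfl | hxK
  · exact hK.ge
  exact (hgt x ⟨hAx, hxK⟩).le

lemma IsIncAlleeMap.lt_self (hf : IsIncAlleeMap b A K f) {x : ℝ} (hx : x ∈ Ioc K b) :
    f x < x :=
  hf.2.2.2.2.2.2.2.2.2.1 x (Or.inr hx)

lemma IsIncAlleeMap.le_capacity (hf : IsIncAlleeMap b A K f) {x : ℝ} (hx : x ∈ Icc 0 K) :
    f x ≤ K := by
  obtain ⟨hA, hAK, hKb, -, -, hmono, -, -, hK, -, -⟩ := hf
  exact hK ▸ hmono.monotoneOn ⟨hx.1, hx.2.trans hKb.le⟩ ⟨by linarith, hKb.le⟩ hx.2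

lemma IsIncAlleeMap.capacity_le (hf : IsIncAlleeMap b A K f) {x : ℝ} (hx : x ∈ Icc K b) :
    K ≤ f x := by
  obtain ⟨hA, hAK, -, -, -, hmono, -, -, hK, -, -⟩ := hf
  exact hK ▸ hmono.monotoneOn ⟨by linarith, hx.1.trans hx.2⟩ ⟨by linarith [hx.1], hx.2⟩ hx.1

end AlleeMap

section Thresholds

variable {F : ℝ → ℝ} {l r δ : ℝ}

lemma closure_sep_Ioo_subset (hF : ContinuousOn F (Icc l r)) :
    closure {x ∈ Ioo l r | δ ≤ F x} ⊆ {x ∈ Icc l r | δ ≤ F x} :=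
  (hF.preimage_isClosed_of_isClosed isClosed_Icc isClosed_Ici).closure_subset_iff.2
    fun _ hx => ⟨Ioo_subset_Icc_self hx.1, hx.2⟩

lemma csInf_sep_Ioo_mem (hF : ContinuousOn F (Icc l r)) (hl : F l < δ)
    (hne : {x ∈ Ioo l r | δ ≤ F x}.Nonempty) :
    sInf {x ∈ Ioo l r | δ ≤ F x} ∈ {x ∈ Ioo l r | δ ≤ F x} := by
  obtain ⟨x₀, hx₀⟩ := hne
  have hbdd : BddBelow {x ∈ Ioo l r | δ ≤ F x} := ⟨l, fun x hx => hx.1.1.le⟩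
  obtain ⟨⟨hl', -⟩, hδ⟩ := closure_sep_Ioo_subset hF (csInf_mem_closure ⟨x₀, hx₀⟩ hbdd)
  refine ⟨⟨hl'.lt_of_ne ?_, (csInf_le hbdd hx₀).trans_lt hx₀.1.2⟩, hδ⟩
  rintro h
  rw [← h] at hδ
  exact hl.not_ge hδ

lemma csSup_sep_Ioo_mem (hF : ContinuousOn F (Icc l r)) (hr : F r < δ)
    (hne : {x ∈ Ioo l r | δ ≤ F x}.Nonempty) :
    sSup {x ∈ Ioo l r | δ ≤ F x} ∈ {x ∈ Ioo l r | δ ≤ F x} := by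
  obtain ⟨x₀, hx₀⟩ := hne
  have hbdd : BddAbove {x ∈ Ioo l r | δ ≤ F x} := ⟨r, fun x hx => hx.1.2.le⟩
  obtain ⟨⟨-, hr'⟩, hδ⟩ := closure_sep_Ioo_subset hF (csSup_mem_closure ⟨x₀, hx₀⟩ hbdd)
  refine ⟨⟨hx₀.1.1.trans_le (le_csSup hbdd hx₀), hr'.lt_of_ne ?_⟩, hδ⟩
  rintro h
  rw [h] at hδ
  exact hr.not_ge hδ

end Thresholds

def decreaseSet (f g : ℝ → ℝ) (δ l r : ℝ) : Set ℝ :=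
  {x ∈ Ioo l r | δ ≤ min (x - f x) (x - g x)}

def increaseSet (f g : ℝ → ℝ) (δ l r : ℝ) : Set ℝ :=
  {x ∈ Ioo l r | δ ≤ min (f x - x) (g x - x)}

section AlleePair

variable {b Af Kf Ag Kg δ : ℝ} {f g : ℝ → ℝ}

local notation "U₁" => decreaseSet f g δ 0 Af
local notation "U₂" => increaseSet f g δ Ag Kf
local notation "U₃" => decreaseSet f g δ Kg b

lemma isIncAlleeMap_csInf_csSup_mem (hf : IsIncAlleeMap b Af Kf f)
    (hg : IsIncAlleeMap b Ag Kg g) (horder : Af < Ag ∧ Ag < Kf ∧ Kf < Kg) (hδ : 0 < δ)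
    (h₁ : (U₁).Nonempty) (h₂ : (U₂).Nonempty) (h₃ : (U₃).Nonempty) :
    sInf U₁ ∈ U₁ ∧ sSup U₁ ∈ U₁ ∧ sInf U₂ ∈ U₂ ∧ sSup U₂ ∈ U₂ ∧ sInf U₃ ∈ U₃ := by
  have hdec : ContinuousOn (fun x => min (x - f x) (x - g x)) (Icc 0 b) :=
    (continuousOn_id.sub hf.continuousOn).inf (continuousOn_id.sub hg.continuousOn)
  have hinc : ContinuousOn (fun x => min (f x - x) (g x - x)) (Icc 0 b) :=
    (hf.continuousOn.sub continuousOn_id).inf (hg.continuousOn.sub continuousOn_id)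
  obtain ⟨hAf, hAKf, hKfb, -, -, -, hf₀, hfA, hfK, -, -⟩ := hf
  obtain ⟨hAg, hAKg, hKgb, -, -, -, -, hgA, hgK, -, -⟩ := hg
  refine ⟨csInf_sep_Ioo_mem (hdec.mono (Icc_subset_Icc le_rfl (by linarith)))
      ((min_le_left _ _).trans_lt (by simpa [hf₀])) h₁,
    csSup_sep_Ioo_mem (hdec.mono (Icc_subset_Icc le_rfl (by linarith)))
      ((min_le_left _ _).trans_lt (by simpa [hfA])) h₁,
    csInf_sep_Ioo_mem (hinc.mono (Icc_subset_Icc (by linarith) (by linarith)))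
      ((min_le_right _ _).trans_lt (by simpa [hgA])) h₂,
    csSup_sep_Ioo_mem (hinc.mono (Icc_subset_Icc (by linarith) (by linarith)))
      ((min_le_left _ _).trans_lt (by simpa [hfK])) h₂,
    csInf_sep_Ioo_mem (hdec.mono (Icc_subset_Icc (by linarith) le_rfl))
      ((min_le_right _ _).trans_lt (by simpa [hgK])) h₃⟩

lemma min_lt_add_of_lt_csInf_increaseSet (hg : IsIncAlleeMap b Ag Kg g) (hδ : 0 < δ)
    (hne : (U₂).Nonempty) {t : ℝ} (ht : t ∈ Ico 0 (sInf U₂)) : min (f t) (g t) < t + δ := by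
  rcases le_or_gt t Ag with htA | hAt
  · linarith [min_le_right (f t) (g t), hg.le_self ⟨ht.1, htA⟩]
  obtain ⟨x₀, hx₀⟩ := hne
  have hbdd : BddBelow U₂ := ⟨Ag, fun x hx => hx.1.1.le⟩
  have : ¬δ ≤ min (f t - t) (g t - t) := fun h => notMem_of_lt_csInf ht.2 hbdd
    ⟨⟨hAt, ht.2.trans_le ((csInf_le hbdd hx₀).trans hx₀.1.2.le)⟩, h⟩
  rw [min_sub_sub_right] at this
  linarith

lemma lt_max_add_of_csSup_decreaseSet_lt (hf : IsIncAlleeMap b Af Kf f) (hδ : 0 < δ)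
    (hne : (U₁).Nonempty) {t : ℝ} (ht : sSup U₁ < t) (htK : t ≤ Kf) :
    t < max (f t) (g t) + δ := by
  rcases lt_or_ge t Af with htA | hAt
  · obtain ⟨x₀, hx₀⟩ := hne
    have hbdd : BddAbove U₁ := ⟨Af, fun x hx => hx.1.2.le⟩
    have : ¬δ ≤ min (t - f t) (t - g t) := fun h => notMem_of_csSup_lt ht hbdd
      ⟨⟨hx₀.1.1.trans_le ((le_csSup hbdd hx₀).trans ht.le), htA⟩, h⟩
    rw [min_sub_sub_left] at this
    linarith
  · linarith [le_max_left (f t) (g t), hf.self_le ⟨hAt, htK⟩]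

lemma max_le_capacity (hf : IsIncAlleeMap b Af Kf f) (hg : IsIncAlleeMap b Ag Kg g)
    (hK : Kf ≤ Kg) {t : ℝ} (ht : t ∈ Icc 0 Kf) : max (f t) (g t) ≤ Kg :=
  max_le ((hf.le_capacity ht).trans hK) (hg.le_capacity ⟨ht.1, ht.2.trans hK⟩)

lemma capacity_le_min_and_min_lt_self (hf : IsIncAlleeMap b Af Kf f)
    (hg : IsIncAlleeMap b Ag Kg g) (hK : Kf < Kg) {t : ℝ} (ht : t ∈ Icc Kg b) :
    Kf ≤ min (f t) (g t) ∧ min (f t) (g t) < t :=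
  ⟨le_min (hf.capacity_le ⟨hK.le.trans ht.1, ht.2⟩) (hK.le.trans (hg.capacity_le ht)),
    (min_le_left _ _).trans_lt (hf.lt_self ⟨hK.trans_le ht.1, ht.2⟩)⟩

lemma isTrap_of_isIncAlleeMap (hf : IsIncAlleeMap b Af Kf f) (hg : IsIncAlleeMap b Ag Kg g)
    (horder : Af < Ag ∧ Ag < Kf ∧ Kf < Kg) (hw₁ : sInf U₁ ∈ U₁) (hz₂ : sSup U₂ ∈ U₂)
    (hw₃ : sInf U₃ ∈ U₃) :
    IsTrap b δ f g (Ico 0 (sInf U₁)) ∧ IsTrap b δ f g (Ioo (sSup U₂) (sInf U₃)) :=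
  ⟨isTrap_Ico hf.monotoneOn hg.monotoneOn ⟨hw₁.1.1, by linarith [hw₁.1.2, hf.2.1, hf.2.2.1]⟩
      hw₁.2,
    isTrap_Ioo hf.monotoneOn hg.monotoneOn (by linarith [hz₂.1.1, horder.1, hf.1]) hw₃.1.2.le
      hz₂.2 hw₃.2⟩

lemma canDrive_of_isIncAlleeMap (hf : IsIncAlleeMap b Af Kf f) (hg : IsIncAlleeMap b Ag Kg g)
    (horder : Af < Ag ∧ Ag < Kf ∧ Kf < Kg) (hδ : 0 < δ) (hw₁ : sInf U₁ ∈ U₁)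
    (hz₁ : sSup U₁ ∈ U₁) (hw₂ : sInf U₂ ∈ U₂) (hz₂ : sSup U₂ ∈ U₂) (hw₃ : sInf U₃ ∈ U₃)
    {y₀ : ℝ} (hy₀ : y₀ ∈ Ioo (sSup U₁) (sInf U₂)) :
    (∀ x ∈ Icc 0 b, CanDrive b δ f g x (Ico 0 (sInf U₁) ∪ Ioo (sSup U₂) (sInf U₃))) ∧
      CanDrive b δ f g y₀ (Ico 0 (sInf U₁)) ∧ CanDrive b δ f g y₀ (Ioo (sSup U₂) (sInf U₃)) := by
  have hw₁₀ := hw₁.1.1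
  have hz₁₀ := hz₁.1.1
  have hz₂K := hz₂.1.2
  have hw₃K := hw₃.1.1
  have hb : 0 ≤ b := by linarith [hf.1, hf.2.1, hf.2.2.1]
  have hfg : ∀ t ∈ Icc 0 b, 0 ≤ min (f t) (g t) :=
    fun t ht => le_min (hf.nonneg ht) (hg.nonneg ht)
  have hy₀b : y₀ ≤ b := by linarith [hy₀.2, hw₂.1.2, hf.2.2.1]
  have hz₂₀ : 0 ≤ sSup U₂ := by linarith [hz₂.1.1, horder.1, hf.1]
  have hz₂w₃ : sSup U₂ < sInf U₃ := by linarith [horder.2.2]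
  have hL : ∀ t ∈ Ico (sInf U₁) (sInf U₂), min (f t) (g t) < t + δ := fun t ht =>
    min_lt_add_of_lt_csInf_increaseSet hg hδ ⟨_, hw₂⟩ ⟨hw₁₀.le.trans ht.1, ht.2⟩
  have hA : ∀ t ∈ Icc y₀ (sSup U₂), t < max (f t) (g t) + δ ∧ max (f t) (g t) < sInf U₃ :=
    fun t ht => ⟨lt_max_add_of_csSup_decreaseSet_lt hf hδ ⟨_, hz₁⟩ (hy₀.1.trans_le ht.1)
        (ht.2.trans hz₂K.le),
      (max_le_capacity hf hg horder.2.2.le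
        ⟨hz₁₀.le.trans (hy₀.1.le.trans ht.1), ht.2.trans hz₂K.le⟩).trans_lt hw₃K⟩
  have hD : ∀ t ∈ Icc (sInf U₃) b, sSup U₂ ≤ min (f t) (g t) ∧ min (f t) (g t) < t :=
    fun t ht => (capacity_le_min_and_min_lt_self hf hg horder.2.2
      ⟨hw₃K.le.trans ht.1, ht.2⟩).imp_left hz₂K.le.trans
  refine ⟨canDrive_union_of_regions hb hδ hf.continuousOn hg.continuousOn hfg hw₁₀ hy₀.2 hz₂₀
      hz₂w₃ hw₃.1.2.le hL hA hD,
    canDrive_Ico_of_descent hb hδ hf.continuousOn hg.continuousOn hfg hw₁₀ hy₀b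
      (fun t ht => hL t ⟨ht.1, ht.2.trans_lt hy₀.2⟩) y₀ ⟨(hz₁₀.trans hy₀.1).le, le_rfl⟩,
    canDrive_Ioo_of_ascent hb hδ hf.continuousOn hg.continuousOn (hz₁₀.trans hy₀.1).le hz₂w₃
      hw₃.1.2.le hA y₀ ⟨le_rfl, by linarith [hy₀.2, hw₂.1.2, horder.2.2]⟩⟩

end AlleePair

theorem stmt7_general
    (b Af Kf Ag Kg : ℝ) (hb : 0 < b)
    (f g : ℝ → ℝ)
    (hf : IsIncAlleeMap b Af Kf f) (hg : IsIncAlleeMap b Ag Kg g)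
    (horder : Af < Ag ∧ Ag < Kf ∧ Kf < Kg)
    (p δ : ℝ) (hp : p ∈ Ioo (0 : ℝ) 1) (hδ : 0 < δ)
    -- the noise law
    (ν : Measure ℝ) [IsProbabilityMeasure ν]
    (hν₁ : ν (Ioo (-δ) δ) = 1)
    (hν₂ : ∀ a c : ℝ, -δ ≤ a → a < c → c ≤ δ → 0 < ν (Ioo a c))
    -- the i.i.d. driving sequence: independent coordinates, each with law Bernoulli(p) ⊗ ν
    (μ : Measure (ℕ → Bool × ℝ)) [IsProbabilityMeasure μ]
    (hindep : iIndepFun (fun n ω => ω n) μ)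
    (hlaw : ∀ n, μ.map (fun ω => ω n) =
      ((PMF.bernoulli (Real.toNNReal p) (Real.toNNReal_le_one.mpr hp.2.le)).toMeasure).prod ν)
    -- the sets U₁, U₂, U₃
    (U₁ U₂ U₃ : Set ℝ)
    (hU₁ : U₁ = {x ∈ Ioo 0 Af | δ ≤ min (x - f x) (x - g x)})
    (hU₂ : U₂ = {x ∈ Ioo Ag Kf | δ ≤ min (f x - x) (g x - x)})
    (hU₃ : U₃ = {x ∈ Ioo Kg b | δ ≤ min (x - f x) (x - g x)})
    (hU₁ne : U₁.Nonempty) (hU₂ne : U₂.Nonempty) (hU₃ne : U₃.Nonempty)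
    (y₀ : ℝ) (hy₀ : y₀ ∈ Ioo (sSup U₁) (sInf U₂)) :
    0 < μ {ω | ∃ n₀ : ℕ, ∀ n ≥ n₀, pertOrbit b f g y₀ n ω ∈ Ico 0 (sInf U₁)} ∧
    0 < μ {ω | ∃ n₀ : ℕ, ∀ n ≥ n₀, pertOrbit b f g y₀ n ω ∈ Ioo (sSup U₂) (sInf U₃)} ∧
    μ {ω | ∃ n₀ : ℕ, ∀ n ≥ n₀, pertOrbit b f g y₀ n ω ∈ Ico 0 (sInf U₁)} +
      μ {ω | ∃ n₀ : ℕ, ∀ n ≥ n₀, pertOrbit b f g y₀ n ω ∈ Ioo (sSup U₂) (sInf U₃)} = 1 := by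
  change U₁ = decreaseSet f g δ 0 Af at hU₁
  change U₂ = increaseSet f g δ Ag Kf at hU₂
  change U₃ = decreaseSet f g δ Kg b at hU₃
  subst hU₁ hU₂ hU₃
  obtain ⟨hw₁, hz₁, hw₂, hz₂, hw₃⟩ :=
    isIncAlleeMap_csInf_csSup_mem hf hg horder hδ hU₁ne hU₂ne hU₃ne
  obtain ⟨hT₀, hT₁⟩ := isTrap_of_isIncAlleeMap hf hg horder hw₁ hz₂ hw₃
  obtain ⟨hcover, hdrive₀, hdrive₁⟩ :=
    canDrive_of_isIncAlleeMap hf hg horder hδ hw₁ hz₁ hw₂ hz₂ hw₃ hy₀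
  have hy₀b : y₀ ∈ Icc 0 b := ⟨(hz₁.1.1.trans hy₀.1).le, by linarith [hy₀.2, hw₂.1.2, hf.2.2.1]⟩
  set π := (PMF.bernoulli (Real.toNNReal p) (Real.toNNReal_le_one.mpr hp.2.le)).toMeasure
  have hwin : ∀ S, IsWindow δ S → 0 < (π.prod ν) S := fun S => prod_pos_of_isWindow
    (PMF.bernoulli_toMeasure_singleton_pos _ (Real.toNNReal_pos.2 hp.1)
      (Real.toNNReal_lt_one.2 hp.2)) hν₂
  have hnoise := ae_snd_mem_of_measure_eq_one (π := π) measurableSet_Ioo hν₁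
  refine ⟨measure_eventually_pertOrbit_mem_pos hindep hlaw hwin hnoise hT₀ hy₀b hdrive₀,
    measure_eventually_pertOrbit_mem_pos hindep hlaw hwin hnoise hT₁ hy₀b hdrive₁,
    measure_eventually_pertOrbit_mem_add_eq_one hindep hlaw hwin hnoise hb.le hf.continuousOn
      hg.continuousOn hT₀ hT₁ measurableSet_Ico measurableSet_Ioo ?_ hcover hy₀b⟩
  exact Set.disjoint_left.2 fun x hx₀ hx₁ => by
    linarith [hx₀.2, hx₁.1, hw₁.1.2, hz₂.1.1, horder.1]

theorem stmt7
    (b Af Kf Ag Kg : ℝ) (hb : 0 < b)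
    (f g : ℝ → ℝ)
    (hf : IsIncAlleeMap b Af Kf f) (hg : IsIncAlleeMap b Ag Kg g)
    (horder : Af < Ag ∧ Ag < Kf ∧ Kf < Kg)
    (p δ : ℝ) (hp : p ∈ Ioo (0 : ℝ) 1) (hδ : 0 < δ)
    -- the noise law
    (ν : Measure ℝ) [IsProbabilityMeasure ν]
    (hν₁ : ν (Ioo (-δ) δ) = 1)
    (hν₂ : ∀ a c : ℝ, -δ ≤ a → a < c → c ≤ δ → 0 < ν (Ioo a c))
    -- the i.i.d. driving sequence: independent coordinates, each with law Bernoulli(p) ⊗ ν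
    (μ : Measure (ℕ → Bool × ℝ)) [IsProbabilityMeasure μ]
    (hindep : iIndepFun (fun n ω => ω n) μ)
    (hlaw : ∀ n, μ.map (fun ω => ω n) =
      ((PMF.bernoulli (Real.toNNReal p) (Real.toNNReal_le_one.mpr hp.2.le)).toMeasure).prod ν)
    -- the sets U₁, U₂, U₃
    (U₁ U₂ U₃ : Set ℝ)
    (hU₁ : U₁ = {x ∈ Ioo 0 Af | δ ≤ min (x - f x) (x - g x)})
    (hU₂ : U₂ = {x ∈ Ioo Ag Kf | δ ≤ min (f x - x) (g x - x)})
    (hU₃ : U₃ = {x ∈ Ioo Kg b | δ ≤ min (x - f x) (x - g x)})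
    (hU₁ne : U₁.Nonempty) (hU₂ne : U₂.Nonempty) (hU₃ne : U₃.Nonempty)
    (hstar : ∀ x ∈ Icc (0 : ℝ) b, ∃ y ∈ Icc x b, δ ≤ min (y - f y) (y - g y))
    (y₀ : ℝ) (hy₀ : y₀ ∈ Ioo (sSup U₁) (sInf U₂)) :
    0 < μ {ω | ∃ n₀ : ℕ, ∀ n ≥ n₀, pertOrbit b f g y₀ n ω ∈ Ico 0 (sInf U₁)} ∧
    0 < μ {ω | ∃ n₀ : ℕ, ∀ n ≥ n₀, pertOrbit b f g y₀ n ω ∈ Ioo (sSup U₂) (sInf U₃)} ∧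
    μ {ω | ∃ n₀ : ℕ, ∀ n ≥ n₀, pertOrbit b f g y₀ n ω ∈ Ico 0 (sInf U₁)} +
      μ {ω | ∃ n₀ : ℕ, ∀ n ≥ n₀, pertOrbit b f g y₀ n ω ∈ Ioo (sSup U₂) (sInf U₃)} = 1 :=
  stmt7_general b Af Kf Ag Kg hb f g hf hg horder p δ hp hδ ν hν₁ hν₂ μ hindep hlaw U₁ U₂ U₃ hU₁ hU₂
    hU₃ hU₁ne hU₂ne hU₃ne y₀ hy₀
end
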